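/- Let C_0 be an [n,t] code over F_q with generator matrix G_0 and let Ĉ be an [n,s] subcode of C_0 with generator matrix Ĝ. Suppose s < k < t and for every S ⊆ [n] with |S| = k, rank(G_0|_S) = k implies rank(Ĝ|_S) = s. If q > C(n,k) (binomial coefficient), then there exists an [n,k] code C with Ĉ ⊆ C ⊆ C_0 such that C is a maximally recoverable subcode of C_0. -/

import Mathlib

open Matrix

section Defs
variable {F : Type*} [Field F]

/-- Rank of the submatrix of `G` consisting of the columns indexed by `S`. -/
noncomputable def colRank {m α : Type*} [Fintype α] (G : Matrix m α F) (S : Finset α) : ℕ :=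
  (G.submatrix id (fun j : S => (j : α))).rank

/-- The row space of a matrix. -/
def rowSpan {m α : Type*} (G : Matrix m α F) : Submodule F (α → F) :=
  Submodule.span F (Set.range fun i => G i)

/-- Rank of the restriction (puncturing) of a code `C` to the coordinates in `S`. -/
noncomputable def restrRank {α : Type*} (C : Submodule F (α → F)) (S : Finset α) : ℕ :=
  Module.finrank F (C.map (LinearMap.funLeft F F (fun j : S => (j : α))))

/-- Shortening of a code on coordinates `α ⊕ β` to the coordinates `α`. -/
noncomputable def shortenSum {α β : Type*} (D : Submodule F ((α ⊕ β) → F)) :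
    Submodule F (α → F) :=
  Submodule.map (LinearMap.funLeft F F Sum.inl)
    (D ⊓ (⨅ j : β, LinearMap.ker
      (LinearMap.proj (R := F) (Sum.inr j) : ((α ⊕ β) → F) →ₗ[F] F)))

/-- A valid (zero-error, worst case) scheme for the point-to-point function-update problem. -/
def IsValidScheme [DecidableEq F] {n m ℓ : ℕ} (A : Matrix (Fin m) (Fin n) F)
    (H : Matrix (Fin ℓ) (Fin n) F) (ε : ℕ)
    (D : (Fin ℓ → F) → (Fin m → F) → (Fin m → F)) : Prop :=
  ∀ X E : Fin n → F, hammingNorm E ≤ ε →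
    D (H.mulVec (X + E)) (A.mulVec X) = A.mulVec (X + E)

end Defs

/-!
Take `G = [Ĝ; A G₀]` with `A` an `r × t` matrix, `r = k - s`. For each `k`-set `S` on which
`G₀` has full rank, the minor `det (G|_S)` is a polynomial in the entries of `A` of degree at
most one in each of them, since each entry of `A` occurs in a single row. It is not the zero
polynomial: the rows of `Ĝ|_S` are independent and those of `G₀|_S` span `F^S`, so a suitable
`A` completes `Ĝ|_S` to an invertible matrix. The product of these at most `C(n,k) < q` minors
has degree `< q` in every variable, so it does not vanish at some point of `F^(r × t)`
(the Combinatorial Nullstellensatz); that point is the required `A`.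
-/
namespace MvPolynomial

variable {σ R : Type*}

theorem exists_eval_ne_zero_of_degreeOf_lt {K : Type*} [Field K] [Fintype K] [Finite σ]
    {p : MvPolynomial σ K} (hp : p ≠ 0) (hdeg : ∀ v, p.degreeOf v < Fintype.card K) :
    ∃ x, eval x p ≠ 0 := by
  by_contra! h
  exact hp (eq_zero_of_eval_zero_at_prod_finset p (fun _ => Finset.univ) hdeg fun x _ => h x)

theorem exists_forall_eval_ne_zero_of_degreeOf_le_one {K ι : Type*} [Field K] [Fintype K]
    [Finite σ] [Fintype ι] {p : ι → MvPolynomial σ K} (hp : ∀ i, p i ≠ 0)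
    (hdeg : ∀ i v, (p i).degreeOf v ≤ 1) (hcard : Fintype.card ι < Fintype.card K) :
    ∃ x, ∀ i, eval x (p i) ≠ 0 := by
  have hprod : ∏ i, p i ≠ 0 := Finset.prod_ne_zero_iff.mpr fun i _ => hp i
  have hdeg_prod : ∀ v, (∏ i, p i).degreeOf v < Fintype.card K := fun v =>
    calc (∏ i, p i).degreeOf v ≤ ∑ i, (p i).degreeOf v := degreeOf_prod_le v _ _
      _ ≤ ∑ _i : ι, 1 := Finset.sum_le_sum fun i _ => hdeg i v
      _ < Fintype.card K := by simpa using hcard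
  obtain ⟨x, hx⟩ := exists_eval_ne_zero_of_degreeOf_lt hprod hdeg_prod
  rw [map_prod] at hx
  exact ⟨x, fun i => Finset.prod_ne_zero_iff.mp hx i (Finset.mem_univ i)⟩

theorem degreeOf_det_le [CommRing R] {κ : Type*} [Fintype κ] [DecidableEq κ]
    (M : Matrix κ κ (MvPolynomial σ R)) (v : σ) :
    M.det.degreeOf v ≤ ∑ i, Finset.univ.sup fun j => (M i j).degreeOf v := by
  rw [Matrix.det_apply']
  refine (degreeOf_sum_le _ _ _).trans (Finset.sup_le fun τ _ => ?_)
  calc (((Equiv.Perm.sign τ : ℤ) : MvPolynomial σ R) * ∏ i, M (τ i) i).degreeOf v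
      ≤ ∑ i, (M (τ i) i).degreeOf v := by
        refine (degreeOf_mul_le _ _ _).trans ?_
        rw [← map_intCast (C : R →+* MvPolynomial σ R), degreeOf_C, zero_add]
        exact degreeOf_prod_le _ _ _
    _ ≤ ∑ i, Finset.univ.sup fun j => (M (τ i) j).degreeOf v :=
        Finset.sum_le_sum fun i _ => Finset.le_sup (f := fun j => (M (τ i) j).degreeOf v)
          (Finset.mem_univ i)
    _ = ∑ i, Finset.univ.sup fun j => (M i j).degreeOf v :=
        Equiv.sum_comp τ fun i => Finset.univ.sup fun j => (M i j).degreeOf v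

end MvPolynomial

section

open MvPolynomial

variable {F : Type*} [Field F]

theorem LinearIndependent.exists_linearIndependent_sumElim {V μ ρ : Type*} [AddCommGroup V]
    [Module F V] [FiniteDimensional F V] [Fintype μ] [Fintype ρ] {B : μ → V}
    (hB : LinearIndependent F B) (hcard : Fintype.card μ + Fintype.card ρ = Module.finrank F V) :
    ∃ W : ρ → V, LinearIndependent F (Sum.elim B W) := by
  obtain ⟨U, hU⟩ := Submodule.exists_isCompl (Submodule.span F (Set.range B))
  have hU_finrank : Fintype.card ρ = Module.finrank F U := by
    have := Submodule.finrank_add_eq_of_isCompl hU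
    rw [finrank_span_eq_card hB] at this
    omega
  let b := (Module.finBasis F U).reindex (Fintype.equivFinOfCardEq hU_finrank).symm
  refine ⟨fun i => b i, hB.sum_type (b.linearIndependent.map' U.subtype U.ker_subtype) ?_⟩
  refine hU.disjoint.mono_right (Submodule.span_le.mpr ?_)
  rintro _ ⟨i, rfl⟩
  exact (b i).2

namespace Matrix

variable {α ℓ μ ρ κ : Type*} [Fintype α]

theorem linearIndependent_row_iff_rank_eq [Fintype μ] {M : Matrix μ α F} :
    LinearIndependent F M.row ↔ M.rank = Fintype.card μ := by
  rw [rank_eq_finrank_span_row, linearIndependent_iff_card_eq_finrank_span, Set.finrank, eq_comm]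

theorem rank_eq_card_iff_det_ne_zero [Fintype κ] [DecidableEq κ] {M : Matrix κ κ F} :
    M.rank = Fintype.card κ ↔ M.det ≠ 0 := by
  rw [← linearIndependent_row_iff_rank_eq, linearIndependent_rows_iff_isUnit,
    isUnit_iff_isUnit_det, isUnit_iff_ne_zero]

theorem exists_mul_eq_of_rank_eq_card [Fintype ℓ] {G : Matrix ℓ α F}
    (hG : G.rank = Fintype.card α) (W : Matrix ρ α F) : ∃ A : Matrix ρ ℓ F, A * G = W := by
  have hspan : Submodule.span F (Set.range G.row) = ⊤ := by
    refine Submodule.eq_top_of_finrank_eq ?_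
    rw [← rank_eq_finrank_span_row, hG, Module.finrank_fintype_fun_eq_card]
  have hW : ∀ i, ∃ a : ℓ → F, ∑ l, a l • G l = W i := fun i =>
    (Submodule.mem_span_range_iff_exists_fun F).mp (hspan ▸ Submodule.mem_top)
  choose A hA using hW
  exact ⟨of A, funext fun i => (vecMul_eq_sum _ _).trans (hA i)⟩

theorem exists_rank_fromRows_mul_eq [Fintype ℓ] [Fintype μ] [Fintype ρ] {B : Matrix μ α F}
    {G : Matrix ℓ α F} (hB : B.rank = Fintype.card μ) (hG : G.rank = Fintype.card α)
    (hcard : Fintype.card μ + Fintype.card ρ = Fintype.card α) :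
    ∃ A : Matrix ρ ℓ F, (fromRows B (A * G)).rank = Fintype.card α := by
  obtain ⟨W, hW⟩ := (linearIndependent_row_iff_rank_eq.mpr hB).exists_linearIndependent_sumElim
    (ρ := ρ) (by rwa [Module.finrank_fintype_fun_eq_card])
  obtain ⟨A, hA⟩ := exists_mul_eq_of_rank_eq_card hG (of W)
  refine ⟨A, ?_⟩
  rw [hA, ← hcard, ← Fintype.card_sum]
  exact LinearIndependent.rank_matrix hW

end Matrix

section ColRank

variable {α m κ : Type*} [Fintype α]

theorem colRank_le_rank (M : Matrix m α F) (S : Finset α) : colRank M S ≤ M.rank :=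
  rank_submatrix_le M id _

theorem colRank_submatrix_equiv {m' : Type*} (M : Matrix m α F) (e : m' ≃ m) (S : Finset α) :
    colRank (M.submatrix e id) S = colRank M S :=
  rank_submatrix (M.submatrix id _) e (Equiv.refl S)

theorem colRank_eq_card_iff_det_ne_zero [Fintype κ] [DecidableEq κ] (M : Matrix κ α F)
    (S : Finset α) (e : κ ≃ S) :
    colRank M S = S.card ↔ (M.submatrix id fun a => (e a : α)).det ≠ 0 := by
  have hcard : S.card = Fintype.card κ := by rw [← Fintype.card_coe, Fintype.card_congr e.symm]
  rw [← rank_eq_card_iff_det_ne_zero, hcard, colRank,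
    ← rank_submatrix (M.submatrix id _) (Equiv.refl κ) e]
  rfl

theorem colRank_eq_card_of_linearIndepOn [Fintype m] {M : Matrix m α F} {S : Finset α}
    (h : LinearIndepOn F M.col (S : Set α)) : colRank M S = S.card := by
  rw [colRank, ← rank_transpose]
  exact (LinearIndependent.rank_matrix h).trans (Fintype.card_coe S)

theorem exists_card_eq_colRank_eq [Fintype m] (M : Matrix m α F) {k : ℕ} (hk : k ≤ M.rank) :
    ∃ S : Finset α, S.card = k ∧ colRank M S = k := by
  classical
  obtain ⟨b, -, -, hspan, hb⟩ :=
    exists_linearIndepOn_extension (linearIndepOn_empty F M.col) (Set.empty_subset Set.univ)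
  have hcard : M.rank ≤ b.toFinset.card := by
    rw [rank_eq_finrank_span_cols, Set.toFinset_card, ← finrank_span_eq_card hb,
      ← Set.image_eq_range]
    refine Submodule.finrank_mono (Submodule.span_le.mpr ?_)
    simpa using hspan
  obtain ⟨S, hSb, hS⟩ := Finset.exists_subset_card_eq (hk.trans hcard)
  refine ⟨S, hS, ?_⟩
  rw [colRank_eq_card_of_linearIndepOn (hb.mono ?_), hS]
  simpa using hSb

end ColRank

section Generic

variable {α ℓ μ ρ : Type*} [Fintype ℓ]

noncomputable def genericFromRowsMul (B : Matrix μ α F) (G : Matrix ℓ α F) (ρ : Type*) :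
    Matrix (μ ⊕ ρ) α (MvPolynomial (ρ × ℓ) F) :=
  -- without the ascription on `C`, `*` elaborates through the `CStarMatrix` default instance
  fromRows (B.map C) (mvPolynomialX ρ ℓ F * G.map (C : F →+* MvPolynomial (ρ × ℓ) F))

theorem genericFromRowsMul_map_eval (B : Matrix μ α F) (G : Matrix ℓ α F)
    (A : Matrix ρ ℓ F) :
    (genericFromRowsMul B G ρ).map (eval fun p => A p.1 p.2) = fromRows B (A * G) := by
  ext (i | i) j <;> simp [genericFromRowsMul, Matrix.mul_apply]

theorem degreeOf_genericFromRowsMul_le [DecidableEq μ] [DecidableEq ρ] (B : Matrix μ α F)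
    (G : Matrix ℓ α F) (a : μ ⊕ ρ) (j : α) (v : ρ × ℓ) :
    (genericFromRowsMul B G ρ a j).degreeOf v ≤ if a = Sum.inr v.1 then 1 else 0 := by
  classical
  rcases a with i | i
  · simp [genericFromRowsMul, degreeOf_C]
  · simp only [genericFromRowsMul, fromRows_apply_inr, Matrix.mul_apply, mvPolynomialX_apply,
      map_apply]
    refine (degreeOf_sum_le _ _ _).trans (Finset.sup_le fun l _ => ?_)
    refine (degreeOf_mul_le _ _ _).trans ?_
    rw [degreeOf_C, add_zero, degreeOf_X]
    by_cases h : v = (i, l)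
    · simp [h]
    · split_ifs <;> simp_all [Prod.ext_iff]

theorem degreeOf_det_genericFromRowsMul_submatrix_le_one [Fintype μ] [Fintype ρ]
    [DecidableEq μ] [DecidableEq ρ] (B : Matrix μ α F) (G : Matrix ℓ α F) (c : μ ⊕ ρ → α)
    (v : ρ × ℓ) : ((genericFromRowsMul B G ρ).submatrix id c).det.degreeOf v ≤ 1 :=
  calc
    _ ≤ ∑ a, Finset.univ.sup fun j => (genericFromRowsMul B G ρ a (c j)).degreeOf v :=
        degreeOf_det_le _ v
    _ ≤ ∑ a : μ ⊕ ρ, if a = Sum.inr v.1 then 1 else 0 :=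
        Finset.sum_le_sum fun a _ =>
          Finset.sup_le fun j _ => degreeOf_genericFromRowsMul_le B G a (c j) v
    _ = 1 := by simp

end Generic

section Sandwich

variable {α ℓ μ ρ : Type*} [Fintype α] [Fintype ℓ] [Fintype μ] [Fintype ρ]

theorem exists_colRank_fromRows_mul_eq (B : Matrix μ α F) (G : Matrix ℓ α F) {S : Finset α}
    (hcard : Fintype.card μ + Fintype.card ρ = S.card) (hB : colRank B S = Fintype.card μ)
    (hG : colRank G S = S.card) :
    ∃ A : Matrix ρ ℓ F, colRank (fromRows B (A * G)) S = S.card := by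
  rw [← Fintype.card_coe S] at hcard hG ⊢
  obtain ⟨A, hA⟩ := exists_rank_fromRows_mul_eq (ρ := ρ) hB hG hcard
  refine ⟨A, ?_⟩
  rw [← hA, colRank]
  congr 1
  ext (i | i) j <;> rfl

theorem exists_forall_colRank_fromRows_mul_eq [Fintype F] (B : Matrix μ α F) (G : Matrix ℓ α F)
    (𝒮 : Finset (Finset α))
    (h𝒮 : ∀ S ∈ 𝒮, Fintype.card μ + Fintype.card ρ = S.card ∧
      colRank B S = Fintype.card μ ∧ colRank G S = S.card)
    (hq : 𝒮.card < Fintype.card F) :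
    ∃ A : Matrix ρ ℓ F, ∀ S ∈ 𝒮, colRank (fromRows B (A * G)) S = S.card := by
  classical
  have e : ∀ S : 𝒮, μ ⊕ ρ ≃ (S : Finset α) := fun S =>
    Fintype.equivOfCardEq (by simpa using (h𝒮 S S.2).1)
  let minor (S : 𝒮) := ((genericFromRowsMul B G ρ).submatrix id fun a => (e S a : α)).det
  have eval_minor (S : 𝒮) (A : Matrix ρ ℓ F) : eval (fun p => A p.1 p.2) (minor S) =
      ((fromRows B (A * G)).submatrix id fun a => (e S a : α)).det := by
    rw [RingHom.map_det, RingHom.mapMatrix_apply, ← submatrix_map, genericFromRowsMul_map_eval]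
  have minor_ne_zero (S : 𝒮) : minor S ≠ 0 := by
    obtain ⟨hcard, hB, hG⟩ := h𝒮 S S.2
    obtain ⟨A, hA⟩ := exists_colRank_fromRows_mul_eq (ρ := ρ) B G hcard hB hG
    rw [colRank_eq_card_iff_det_ne_zero _ _ (e S), ← eval_minor] at hA
    exact fun h => hA (by rw [h, map_zero])
  obtain ⟨x, hx⟩ := exists_forall_eval_ne_zero_of_degreeOf_le_one minor_ne_zero
    (fun S => degreeOf_det_genericFromRowsMul_submatrix_le_one B G _) (by simpa using hq)
  refine ⟨of fun i l => x (i, l), fun S hS => ?_⟩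
  rw [colRank_eq_card_iff_det_ne_zero _ _ (e ⟨S, hS⟩), ← eval_minor]
  exact hx _

end Sandwich

section RowSpan

variable {α m m' ρ ℓ : Type*}

theorem rowSpan_le_iff (M : Matrix m α F) (V : Submodule F (α → F)) :
    rowSpan M ≤ V ↔ ∀ i, M i ∈ V := by
  rw [rowSpan, Submodule.span_le, Set.range_subset_iff]
  rfl

theorem rowSpan_submatrix_equiv (M : Matrix m α F) (e : m' ≃ m) :
    rowSpan (M.submatrix e id) = rowSpan M := by
  rw [rowSpan, rowSpan, ← e.surjective.range_comp]
  rfl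

theorem rowSpan_fromRows (M₁ : Matrix m α F) (M₂ : Matrix m' α F) :
    rowSpan (fromRows M₁ M₂) = rowSpan M₁ ⊔ rowSpan M₂ := by
  rw [rowSpan, rowSpan, rowSpan, ← Submodule.span_union, ← Set.Sum.elim_range]
  rfl

theorem rowSpan_mul_le [Fintype ℓ] (A : Matrix ρ ℓ F) (M : Matrix ℓ α F) :
    rowSpan (A * M) ≤ rowSpan M := by
  refine (rowSpan_le_iff _ _).mpr fun i => ?_
  rw [mul_apply_eq_vecMul, vecMul_eq_sum]
  exact Submodule.sum_mem _ fun l _ => Submodule.smul_mem _ _ (Submodule.subset_span ⟨l, rfl⟩)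

end RowSpan

end

theorem sandwiched_mrsc_exists_general {F : Type*} [Field F] [Fintype F] {n t s k : ℕ}
    (hsk : s < k) (hkt : k < t)
    (G0 : Matrix (Fin t) (Fin n) F) (hG0 : G0.rank = t)
    (Ghat : Matrix (Fin s) (Fin n) F)
    (hsub : ∀ i, Ghat i ∈ rowSpan G0)
    (hnec : ∀ S : Finset (Fin n), S.card = k → colRank G0 S = k → colRank Ghat S = s)
    (hq : n.choose k < Fintype.card F) :
    ∃ G : Matrix (Fin k) (Fin n) F, G.rank = k ∧
      (∀ i, Ghat i ∈ rowSpan G) ∧ (∀ i, G i ∈ rowSpan G0) ∧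
      ∀ S : Finset (Fin n), S.card = k → colRank G0 S = k → colRank G S = k := by
  classical
  obtain ⟨r, rfl⟩ : ∃ r, k = s + r := ⟨k - s, by omega⟩
  let 𝒮 := (Finset.univ.powersetCard (s + r)).filter fun S => colRank G0 S = s + r
  have mem_𝒮 {S} : S ∈ 𝒮 ↔ S.card = s + r ∧ colRank G0 S = s + r := by
    simp [𝒮, Finset.mem_powersetCard]
  have h𝒮 : 𝒮.card ≤ n.choose (s + r) := by
    simpa using Finset.card_filter_le (Finset.univ.powersetCard (s + r))
      fun S => colRank G0 S = s + r
  obtain ⟨A, hA⟩ := exists_forall_colRank_fromRows_mul_eq (ρ := Fin r) Ghat G0 𝒮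
    (fun S hS => by
      obtain ⟨hcard, hG0S⟩ := mem_𝒮.mp hS
      simpa [hcard, hG0S] using hnec S hcard hG0S)
    (h𝒮.trans_lt hq)
  set M := fromRows Ghat (A * G0)
  have hM (S : Finset (Fin n)) (hS : S.card = s + r) (hG0S : colRank G0 S = s + r) :
      colRank M S = s + r := hS ▸ hA S (mem_𝒮.mpr ⟨hS, hG0S⟩)
  obtain ⟨S₀, hS₀, hG0S₀⟩ := exists_card_eq_colRank_eq G0 (k := s + r) (by omega)
  refine ⟨M.submatrix finSumFinEquiv.symm id, ?_, ?_, ?_, fun S hS hG0S => ?_⟩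
  · rw [show (M.submatrix _ id).rank = M.rank from rank_submatrix M _ (Equiv.refl _)]
    refine le_antisymm (by simpa using rank_le_card_height M) ?_
    exact (hM S₀ hS₀ hG0S₀).symm.trans_le (colRank_le_rank M S₀)
  · rw [← rowSpan_le_iff, rowSpan_submatrix_equiv, rowSpan_fromRows]
    exact le_sup_left
  · rw [← rowSpan_le_iff, rowSpan_submatrix_equiv, rowSpan_fromRows]
    exact sup_le ((rowSpan_le_iff _ _).mpr hsub) (rowSpan_mul_le A G0)
  · rw [colRank_submatrix_equiv]
    exact hM S hS hG0S

/-- existence of sandwiched MRSCs: under the necessary rank condition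
on `Ĝ` and `q > C(n,k)`, there is an `[n,k]` MRSC `C` of `C₀` with `Ĉ ⊆ C ⊆ C₀`. -/
theorem sandwiched_mrsc_exists {F : Type*} [Field F] [Fintype F] {n t s k : ℕ}
    (hsk : s < k) (hkt : k < t)
    (G0 : Matrix (Fin t) (Fin n) F) (hG0 : G0.rank = t)
    (Ghat : Matrix (Fin s) (Fin n) F) (hGhat : Ghat.rank = s)
    (hsub : ∀ i, Ghat i ∈ rowSpan G0)
    (hnec : ∀ S : Finset (Fin n), S.card = k → colRank G0 S = k → colRank Ghat S = s)
    (hq : n.choose k < Fintype.card F) :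
    ∃ G : Matrix (Fin k) (Fin n) F, G.rank = k ∧
      (∀ i, Ghat i ∈ rowSpan G) ∧ (∀ i, G i ∈ rowSpan G0) ∧
      ∀ S : Finset (Fin n), S.card = k → colRank G0 S = k → colRank G S = k :=
  sandwiched_mrsc_exists_general hsk hkt G0 hG0 Ghat hsub hnec hq
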